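/- Let M→N be a matroid perspective on a finite linearly ordered ground set E, and let B ⊆ E. Let e ∈ E∖B and f ∈ B. Suppose C is a circuit of M with C∖{e} ⊆ B and e = min(C), and D is a cocircuit of N with D∖{f} ⊆ E∖B and f = min(D). Then C ∩ D = ∅. -/

import Mathlib

/-- A circuit of a matroid: a minimal dependent set. -/
def Matroid.IsCircuit' {α : Type*} (M : Matroid α) (C : Set α) : Prop :=
  M.Dep C ∧ ∀ D, M.Dep D → D ⊆ C → D = C

/-- A cocircuit of a matroid: a circuit of the dual matroid. -/
def Matroid.IsCocircuit' {α : Type*} (M : Matroid α) (C : Set α) : Prop :=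
  M✶.IsCircuit' C

/-- The rank of a set in a matroid: the largest cardinality of an independent subset. -/
noncomputable def Matroid.rk' {α : Type*} (M : Matroid α) (A : Set α) : ℕ :=
  sSup {n : ℕ | ∃ I, I ⊆ A ∧ M.Indep I ∧ I.ncard = n}

/-- `e` is the minimum element of the set `C`. -/
def IsMinOf {α : Type*} [LinearOrder α] (C : Set α) (e : α) : Prop :=
  e ∈ C ∧ ∀ x ∈ C, e ≤ x

/-- `Int_M(A)`: internally active elements of `A` w.r.t. `M`
(the ground set is the whole type, so `E ∖ A = Aᶜ`). -/
def IntSet {α : Type*} [LinearOrder α] (M : Matroid α) (A : Set α) : Set α :=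
  {e | e ∈ A ∧ ∃ C, M.IsCocircuit' C ∧ C ⊆ Aᶜ ∪ {e} ∧ IsMinOf C e}

/-- `Ext_M(A)`: externally active elements w.r.t. `M`. -/
def ExtSet {α : Type*} [LinearOrder α] (M : Matroid α) (A : Set α) : Set α :=
  {e | e ∉ A ∧ ∃ C, M.IsCircuit' C ∧ C ⊆ A ∪ {e} ∧ IsMinOf C e}

/-- `P_M(A)`: smallest elements of cocircuits of `M` contained in `E ∖ A`. -/
def PActSet {α : Type*} [LinearOrder α] (M : Matroid α) (A : Set α) : Set α :=
  {e | e ∉ A ∧ ∃ C, M.IsCocircuit' C ∧ C ⊆ Aᶜ ∧ IsMinOf C e}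

/-- `Q_M(A)`: smallest elements of circuits of `M` contained in `A`. -/
def QActSet {α : Type*} [LinearOrder α] (M : Matroid α) (A : Set α) : Set α :=
  {e | e ∈ A ∧ ∃ C, M.IsCircuit' C ∧ C ⊆ A ∧ IsMinOf C e}

/-!
The complement of a cocircuit `D` of `N` is a flat of `N` (an element of `D` in its closure would
lie on a circuit meeting `D` in one element), hence a flat of `M`. A circuit `C` of `M` meeting `D`
in a single element `x` would put `x` in the closure of `C \ {x} ⊆ Dᶜ`, so in `Dᶜ`. Finally, the
minimality of `e` in `C` and of `f` in `D` forces `C ∩ D ⊆ {e, f}` to have at most one element.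
-/

open Set

namespace Matroid

variable {α : Type*} {M N : Matroid α} {C D : Set α} {x : α}

lemma isCircuit'_iff : M.IsCircuit' C ↔ M.IsCircuit C := by
  rw [isCircuit_iff]
  rfl

lemma isCocircuit'_iff : M.IsCocircuit' C ↔ M.IsCocircuit C :=
  isCircuit'_iff

lemma IsCocircuit.isFlat_ground_sdiff (hD : M.IsCocircuit D) : M.IsFlat (M.E \ D) := by
  refine isFlat_iff_closure_eq.2 <| subset_antisymm (fun y hy ↦ ?_) (M.subset_closure _)
  by_contra hyD
  have hyD' : y ∈ D := by
    by_contra hyD'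
    exact hyD ⟨M.closure_subset_ground _ hy, hyD'⟩
  obtain ⟨C, hCsub, hC, hyC⟩ := exists_isCircuit_of_mem_closure hy hyD
  refine hC.inter_isCocircuit_ne_singleton hD (e := y) <| subset_antisymm (fun z hz ↦ ?_) ?_
  · obtain rfl | hz' := hCsub hz.1
    · rfl
    · exact absurd hz.2 hz'.2
  · exact singleton_subset_iff.2 ⟨hyC, hyD'⟩

/-- `M → N` is a matroid perspective. -/
structure IsPerspective (M N : Matroid α) : Prop where
  ground_eq : M.E = N.E
  isFlat_of_isFlat : ∀ ⦃F⦄, N.IsFlat F → M.IsFlat F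

lemma IsPerspective.isCircuit_inter_isCocircuit_ne_singleton (hMN : M.IsPerspective N)
    (hC : M.IsCircuit C) (hD : N.IsCocircuit D) : C ∩ D ≠ {x} := by
  intro hCD
  have hxC : x ∈ C := (hCD.symm.subset rfl).1
  have hxD : x ∈ D := (hCD.symm.subset rfl).2
  have hF : M.IsFlat (N.E \ D) := hMN.isFlat_of_isFlat hD.isFlat_ground_sdiff
  have hCF : C \ {x} ⊆ N.E \ D := fun y hy ↦
    ⟨hMN.ground_eq ▸ hC.subset_ground hy.1, fun hyD ↦ hy.2 (hCD ▸ ⟨hy.1, hyD⟩)⟩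
  have hxF : x ∈ N.E \ D :=
    hF.closure ▸ M.closure_subset_closure hCF (hC.mem_closure_sdiff_singleton_of_mem hxC)
  exact hxF.2 hxD

end Matroid

lemma inter_subsingleton_of_isMinOf {α : Type*} [LinearOrder α] {B C D : Set α} {e f : α}
    (he : e ∉ B) (hf : f ∈ B) (hCB : C \ {e} ⊆ B) (heC : IsMinOf C e) (hDB : D \ {f} ⊆ Bᶜ)
    (hfD : IsMinOf D f) : (C ∩ D).Subsingleton := by
  have hef : ∀ y ∈ C ∩ D, y = e ∨ y = f := fun y hy ↦ by
    by_contra! hy'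
    exact hDB ⟨hy.2, hy'.2⟩ (hCB ⟨hy.1, hy'.1⟩)
  have hfe : ¬(f ∈ C ∧ e ∈ D) := fun ⟨hfC, heD⟩ ↦
    he (le_antisymm (heC.2 f hfC) (hfD.2 e heD) ▸ hf)
  intro y hy z hz
  rcases hef y hy with rfl | rfl <;> rcases hef z hz with rfl | rfl
  exacts [rfl, absurd ⟨hz.1, hy.2⟩ hfe, absurd ⟨hy.1, hz.2⟩ hfe, rfl]

theorem stmt5_general {α : Type*} [LinearOrder α] (M N : Matroid α)
    (hME : M.E = Set.univ) (hNE : N.E = Set.univ)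
    (hMN : ∀ F, N.IsFlat F → M.IsFlat F)
    (B : Set α) (e f : α) (he : e ∉ B) (hf : f ∈ B)
    (C : Set α) (hC : M.IsCircuit' C) (hCB : C \ {e} ⊆ B) (heC : IsMinOf C e)
    (D : Set α) (hD : N.IsCocircuit' D) (hDB : D \ {f} ⊆ Bᶜ) (hfD : IsMinOf D f) :
    C ∩ D = ∅ := by
  have hP : M.IsPerspective N := ⟨hME.trans hNE.symm, fun F ↦ hMN F⟩
  rw [← not_nonempty_iff_eq_empty]
  rintro ⟨x, hx⟩
  have hCD : C ∩ D = {x} :=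
    (inter_subsingleton_of_isMinOf he hf hCB heC hDB hfD).eq_singleton_of_mem hx
  exact hP.isCircuit_inter_isCocircuit_ne_singleton (Matroid.isCircuit'_iff.1 hC)
    (Matroid.isCocircuit'_iff.1 hD) hCD

/-- For a matroid perspective `M → N`, if `C` is a circuit of `M` with `C ∖ {e} ⊆ B`
and `e = min C`, `e ∉ B`, and `D` is a cocircuit of `N` with `D ∖ {f} ⊆ E ∖ B` and
`f = min D`, `f ∈ B`, then `C ∩ D = ∅`. -/
theorem stmt5 {α : Type*} [Fintype α] [LinearOrder α] (M N : Matroid α)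
    (hME : M.E = Set.univ) (hNE : N.E = Set.univ)
    (hMN : ∀ F, N.IsFlat F → M.IsFlat F)
    (B : Set α) (e f : α) (he : e ∉ B) (hf : f ∈ B)
    (C : Set α) (hC : M.IsCircuit' C) (hCB : C \ {e} ⊆ B) (heC : IsMinOf C e)
    (D : Set α) (hD : N.IsCocircuit' D) (hDB : D \ {f} ⊆ Bᶜ) (hfD : IsMinOf D f) :
    C ∩ D = ∅ :=
  stmt5_general M N hME hNE hMN B e f he hf C hC hCB heC D hD hDB hfD
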